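/- arXiv:2505.13364 — 3 statements merged into one kernel-verified Lean document; each statement's English description precedes it below -/
import Mathlib

section
/- Let (𝒲_t)_{t≥0} and (𝒱_t)_{t≥0} be bounded real stochastic processes with 𝒲_{t+1} = (1 - 1/(t+1))𝒲_t + Y_{t+1}/(t+1) + R_{t+1} and 𝒱_{t+1} = (1 - 1/(t+2))𝒱_t + Y_{t+1}/(t+2), where (Y_t) is bounded and R_t = O(1/t^{1+β}) for some β > 0. Then |𝒲_t - 𝒱_t| = O(1/t)·|𝒲_0 - 𝒱_0| + (1/t)·Σ_{n=0}^{t} O(n^{-β'}), where β' = min(β,1); in particular |𝒲_t - 𝒱_t| = O(ln(t)/t^{β'}) → 0. -/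
open Filter Real

set_option maxHeartbeats 2000000

/-- Comparison of two stochastic-approximation type recursions.  If
`𝒲_{t+1} = (1 - 1/(t+1))𝒲_t + Y_{t+1}/(t+1) + R_{t+1}` and
`𝒱_{t+1} = (1 - 1/(t+2))𝒱_t + Y_{t+1}/(t+2)`, with `(𝒲_t)`, `(𝒱_t)`, `(Y_t)` bounded and
`R_t = O(1/t^{1+β})` for some `β > 0`, then
`|𝒲_t - 𝒱_t| = O(1/t)|𝒲_0 - 𝒱_0| + (1/t)Σ_{n=0}^t O(n^{-β'})` with `β' = min(β,1)`;
in particular `|𝒲_t - 𝒱_t| = O(ln t / t^{β'}) → 0`. -/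
theorem recursion_comparison
    (W V Y R : ℕ → ℝ) (β : ℝ) (hβ : 0 < β)
    (hWbd : ∃ K, ∀ t, |W t| ≤ K) (hVbd : ∃ K, ∀ t, |V t| ≤ K)
    (hYbd : ∃ K, ∀ t, |Y t| ≤ K)
    (hR : ∃ C > (0 : ℝ), ∃ t₀ : ℕ, ∀ t ≥ t₀, |R t| ≤ C / (t : ℝ) ^ (1 + β))
    (hWrec : ∀ t : ℕ, W (t + 1) =
      (1 - 1 / ((t : ℝ) + 1)) * W t + Y (t + 1) / ((t : ℝ) + 1) + R (t + 1))
    (hVrec : ∀ t : ℕ, V (t + 1) =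
      (1 - 1 / ((t : ℝ) + 2)) * V t + Y (t + 1) / ((t : ℝ) + 2)) :
    (∃ C > (0 : ℝ), ∀ t : ℕ, 1 ≤ t →
      |W t - V t| ≤ (C / t) * |W 0 - V 0|
        + (1 / t) * ∑ n ∈ Finset.range (t + 1), C * ((n : ℝ) + 1) ^ (-(min β 1))) ∧
    (∃ C > (0 : ℝ), ∀ t : ℕ, 2 ≤ t →
      |W t - V t| ≤ C * Real.log t / (t : ℝ) ^ (min β 1)) ∧
    Tendsto (fun t : ℕ => W t - V t) atTop (nhds 0) := by
  obtain ⟨KW, hKW⟩ := hWbd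
  obtain ⟨KV, hKV⟩ := hVbd
  obtain ⟨KY, hKY⟩ := hYbd
  obtain ⟨C, hCpos, t₀, hR⟩ := hR
  have hKW0 : 0 ≤ KW := (abs_nonneg _).trans (hKW 0)
  have hKV0 : 0 ≤ KV := (abs_nonneg _).trans (hKV 0)
  have hKY0 : 0 ≤ KY := (abs_nonneg _).trans (hKY 0)
  set β' := min β 1 with hβ'def
  have hβ'pos : 0 < β' := lt_min hβ one_pos
  have hβ'le : β' ≤ 1 := min_le_right _ _
  have hβ'leβ : β' ≤ β := min_le_left _ _
  -- crude uniform bound on |R (s+1)|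
  have hM : ∀ s : ℕ, |R (s + 1)| ≤ 2 * KW + KY := by
    intro s
    have h1 : R (s + 1) = W (s + 1) - (1 - 1 / ((s : ℝ) + 1)) * W s
        - Y (s + 1) / ((s : ℝ) + 1) := by rw [hWrec s]; ring
    have hs1 : (0 : ℝ) < (s : ℝ) + 1 := by positivity
    have hfac : |1 - 1 / ((s : ℝ) + 1)| ≤ 1 := by
      rw [abs_le]
      constructor
      · have : 1 / ((s : ℝ) + 1) ≤ 1 := by
          rw [div_le_one hs1]; linarith
        linarith
      · have : 0 < 1 / ((s : ℝ) + 1) := by positivity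
        linarith
    have hdiv : |Y (s + 1) / ((s : ℝ) + 1)| ≤ KY := by
      rw [abs_div, abs_of_pos hs1]
      calc |Y (s + 1)| / ((s : ℝ) + 1) ≤ |Y (s + 1)| / 1 := by
            apply div_le_div_of_nonneg_left (abs_nonneg _) one_pos; linarith
        _ = |Y (s + 1)| := by ring
        _ ≤ KY := hKY _
    calc |R (s + 1)| ≤ |W (s + 1)| + |(1 - 1 / ((s : ℝ) + 1)) * W s|
          + |Y (s + 1) / ((s : ℝ) + 1)| := by
          rw [h1]; exact (abs_sub _ _).trans (by gcongr; exact abs_sub _ _)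
      _ ≤ KW + 1 * KW + KY := by
          gcongr
          · exact hKW _
          · rw [abs_mul]
            exact mul_le_mul hfac (hKW _) (abs_nonneg _) zero_le_one
      _ = 2 * KW + KY := by ring
  -- per-step identity
  have hterm : ∀ s : ℕ, ((s : ℝ) + 1) * (W (s + 1) - V (s + 1)) - (s : ℝ) * (W s - V s)
      = (Y (s + 1) - V s) / ((s : ℝ) + 2) + ((s : ℝ) + 1) * R (s + 1) := by
    intro s
    have hs1 : ((s : ℝ) + 1) ≠ 0 := by positivity
    have hs2 : ((s : ℝ) + 2) ≠ 0 := by positivity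
    rw [hWrec s, hVrec s]
    field_simp
    ring
  -- telescoping
  have htele : ∀ t : ℕ, (t : ℝ) * (W t - V t)
      = ∑ s ∈ Finset.range t,
          ((Y (s + 1) - V s) / ((s : ℝ) + 2) + ((s : ℝ) + 1) * R (s + 1)) := by
    intro t
    have h := Finset.sum_range_sub (fun n : ℕ => (n : ℝ) * (W n - V n)) t
    simp only [Nat.cast_zero, zero_mul, sub_zero] at h
    rw [← h]
    apply Finset.sum_congr rfl
    intro s _
    push_cast
    rw [← hterm s]
  -- constant
  set C₁ : ℝ := KY + KV + C + ((t₀ : ℝ) + 1) ^ 2 * (2 * KW + KY + 1) + 1 with hC₁def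
  have hC₁pos : 0 < C₁ := by positivity
  -- bound on each summand
  have hebound : ∀ s : ℕ, |(Y (s + 1) - V s) / ((s : ℝ) + 2) + ((s : ℝ) + 1) * R (s + 1)|
      ≤ C₁ * ((s : ℝ) + 1) ^ (-β') := by
    intro s
    have hs1 : (0 : ℝ) < (s : ℝ) + 1 := by positivity
    have hs1' : (1 : ℝ) ≤ (s : ℝ) + 1 := by
      have : (0 : ℝ) ≤ (s : ℝ) := Nat.cast_nonneg s
      linarith
    have hrpow1 : ((s : ℝ) + 1) ^ (-(1 : ℝ)) ≤ ((s : ℝ) + 1) ^ (-β') :=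
      Real.rpow_le_rpow_of_exponent_le hs1' (by linarith)
    have hrpowinv : ((s : ℝ) + 1) ^ (-(1 : ℝ)) = (((s : ℝ) + 1))⁻¹ := by
      rw [Real.rpow_neg_one]
    -- first term
    have h1 : |(Y (s + 1) - V s) / ((s : ℝ) + 2)| ≤ (KY + KV) * ((s : ℝ) + 1) ^ (-β') := by
      rw [abs_div, abs_of_pos (by positivity : (0 : ℝ) < (s : ℝ) + 2)]
      calc |Y (s + 1) - V s| / ((s : ℝ) + 2) ≤ (KY + KV) / ((s : ℝ) + 2) := by
            gcongr
            exact (abs_sub _ _).trans (add_le_add (hKY _) (hKV _))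
        _ ≤ (KY + KV) * (((s : ℝ) + 1))⁻¹ := by
            rw [div_eq_mul_inv]
            exact mul_le_mul_of_nonneg_left
              (inv_anti₀ hs1 (by linarith)) (by positivity)
        _ ≤ (KY + KV) * ((s : ℝ) + 1) ^ (-β') := by
            rw [← hrpowinv]
            exact mul_le_mul_of_nonneg_left hrpow1 (by positivity)
    -- second term
    have h2 : ((s : ℝ) + 1) * |R (s + 1)|
        ≤ (C + ((t₀ : ℝ) + 1) ^ 2 * (2 * KW + KY + 1)) * ((s : ℝ) + 1) ^ (-β') := by
      rcases le_or_gt t₀ (s + 1) with hc | hc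
      · -- tail regime
        have hRb := hR (s + 1) hc
        have hcast : ((s + 1 : ℕ) : ℝ) = (s : ℝ) + 1 := by push_cast; ring
        rw [hcast] at hRb
        have hpow : ((s : ℝ) + 1) * (C / ((s : ℝ) + 1) ^ (1 + β)) = C * ((s : ℝ) + 1) ^ (-β) := by
          rw [Real.rpow_add hs1, Real.rpow_one, Real.rpow_neg hs1.le]
          field_simp
        have : ((s : ℝ) + 1) * |R (s + 1)| ≤ C * ((s : ℝ) + 1) ^ (-β) := by
          rw [← hpow]; gcongr
        refine this.trans ?_
        have hβmono : ((s : ℝ) + 1) ^ (-β) ≤ ((s : ℝ) + 1) ^ (-β') :=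
          Real.rpow_le_rpow_of_exponent_le hs1' (by linarith)
        calc C * ((s : ℝ) + 1) ^ (-β) ≤ C * ((s : ℝ) + 1) ^ (-β') :=
              mul_le_mul_of_nonneg_left hβmono hCpos.le
          _ ≤ (C + ((t₀ : ℝ) + 1) ^ 2 * (2 * KW + KY + 1)) * ((s : ℝ) + 1) ^ (-β') := by
              apply mul_le_mul_of_nonneg_right _ (by positivity)
              nlinarith [hKW0, hKY0, sq_nonneg ((t₀ : ℝ) + 1)]
      · -- initial regime : s + 1 < t₀
        have hst : (s : ℝ) + 1 ≤ (t₀ : ℝ) := by exact_mod_cast hc.le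
        have hinv : ((t₀ : ℝ))⁻¹ ≤ ((s : ℝ) + 1) ^ (-β') := by
          have ht₀pos : (0 : ℝ) < (t₀ : ℝ) := lt_of_lt_of_le hs1 hst
          calc ((t₀ : ℝ))⁻¹ ≤ (((s : ℝ) + 1))⁻¹ := by
                apply inv_anti₀ hs1 hst
            _ = ((s : ℝ) + 1) ^ (-(1 : ℝ)) := hrpowinv.symm
            _ ≤ ((s : ℝ) + 1) ^ (-β') := hrpow1
        have ht₀pos : (0 : ℝ) < (t₀ : ℝ) := lt_of_lt_of_le hs1 hst
        calc ((s : ℝ) + 1) * |R (s + 1)| ≤ (t₀ : ℝ) * (2 * KW + KY + 1) := by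
              apply mul_le_mul hst ((hM s).trans (by linarith)) (abs_nonneg _) ht₀pos.le
          _ = ((t₀ : ℝ) ^ 2 * (2 * KW + KY + 1)) * ((t₀ : ℝ))⁻¹ := by
              field_simp
          _ ≤ ((t₀ : ℝ) ^ 2 * (2 * KW + KY + 1)) * ((s : ℝ) + 1) ^ (-β') :=
              mul_le_mul_of_nonneg_left hinv (by positivity)
          _ ≤ (C + ((t₀ : ℝ) + 1) ^ 2 * (2 * KW + KY + 1)) * ((s : ℝ) + 1) ^ (-β') := by
              apply mul_le_mul_of_nonneg_right _ (by positivity)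
              nlinarith [hKW0, hKY0, Nat.cast_nonneg (α := ℝ) t₀, hCpos]
    calc |(Y (s + 1) - V s) / ((s : ℝ) + 2) + ((s : ℝ) + 1) * R (s + 1)|
        ≤ |(Y (s + 1) - V s) / ((s : ℝ) + 2)| + ((s : ℝ) + 1) * |R (s + 1)| := by
          refine (abs_add_le _ _).trans ?_
          rw [abs_mul, abs_of_pos hs1]
      _ ≤ (KY + KV) * ((s : ℝ) + 1) ^ (-β')
          + (C + ((t₀ : ℝ) + 1) ^ 2 * (2 * KW + KY + 1)) * ((s : ℝ) + 1) ^ (-β') :=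
          add_le_add h1 h2
      _ ≤ C₁ * ((s : ℝ) + 1) ^ (-β') := by
          rw [hC₁def]
          have : (0 : ℝ) ≤ ((s : ℝ) + 1) ^ (-β') := by positivity
          nlinarith
  -- key bound
  have key : ∀ t : ℕ, 1 ≤ t →
      |W t - V t| ≤ (1 / t) * ∑ n ∈ Finset.range (t + 1), C₁ * ((n : ℝ) + 1) ^ (-β') := by
    intro t ht
    have htpos : (0 : ℝ) < (t : ℝ) := by exact_mod_cast ht
    have h1 : (t : ℝ) * |W t - V t|
        ≤ ∑ n ∈ Finset.range (t + 1), C₁ * ((n : ℝ) + 1) ^ (-β') := by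
      calc (t : ℝ) * |W t - V t| = |(t : ℝ) * (W t - V t)| := by
            rw [abs_mul, abs_of_pos htpos]
        _ = |∑ s ∈ Finset.range t,
              ((Y (s + 1) - V s) / ((s : ℝ) + 2) + ((s : ℝ) + 1) * R (s + 1))| := by
            rw [htele t]
        _ ≤ ∑ s ∈ Finset.range t, C₁ * ((s : ℝ) + 1) ^ (-β') :=
            (Finset.abs_sum_le_sum_abs _ _).trans
              (Finset.sum_le_sum fun s _ => hebound s)
        _ ≤ ∑ n ∈ Finset.range (t + 1), C₁ * ((n : ℝ) + 1) ^ (-β') := by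
            apply Finset.sum_le_sum_of_subset_of_nonneg
              (Finset.range_subset_range.mpr (Nat.le_succ t))
            intro i _ _
            positivity
    rw [one_div, inv_mul_eq_div, le_div_iff₀ htpos, mul_comm]
    exact h1
  have hlog2 : (0 : ℝ) < Real.log 2 := Real.log_pos one_lt_two
  have hlogclaim : ∀ t : ℕ, 2 ≤ t →
      |W t - V t| ≤ 2 * C₁ * (2 + 1 / Real.log 2) * Real.log t / (t : ℝ) ^ β' := by
    intro t ht
    have htpos : (0 : ℝ) < (t : ℝ) := by
      have : (0 : ℕ) < t := by omega
      exact_mod_cast this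
    have ht1 : (1 : ℝ) ≤ (t : ℝ) := by exact_mod_cast Nat.one_le_of_lt ht
    have ht2 : (2 : ℝ) ≤ (t : ℝ) := by exact_mod_cast ht
    -- sum bound via harmonic numbers
    have hsum : ∑ n ∈ Finset.range (t + 1), ((n : ℝ) + 1) ^ (-β')
        ≤ ((t : ℝ) + 1) ^ (1 - β') * (1 + Real.log (t + 1)) := by
      have hstep : ∀ n ∈ Finset.range (t + 1),
          ((n : ℝ) + 1) ^ (-β') ≤ ((t : ℝ) + 1) ^ (1 - β') * ((n : ℝ) + 1)⁻¹ := by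
        intro n hn
        have hn' : (n : ℝ) + 1 ≤ (t : ℝ) + 1 := by
          have : n ≤ t := by
            have := Finset.mem_range.mp hn; omega
          have : (n : ℝ) ≤ (t : ℝ) := by exact_mod_cast this
          linarith
        have hn1 : (0 : ℝ) < (n : ℝ) + 1 := by positivity
        have : ((n : ℝ) + 1) ^ (-β') = ((n : ℝ) + 1) ^ (1 - β') * ((n : ℝ) + 1)⁻¹ := by
          rw [← Real.rpow_neg_one ((n : ℝ) + 1), ← Real.rpow_add hn1]
          ring_nf
        rw [this]
        apply mul_le_mul_of_nonneg_right _ (by positivity)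
        exact Real.rpow_le_rpow hn1.le hn' (by linarith)
      calc ∑ n ∈ Finset.range (t + 1), ((n : ℝ) + 1) ^ (-β')
          ≤ ∑ n ∈ Finset.range (t + 1), ((t : ℝ) + 1) ^ (1 - β') * ((n : ℝ) + 1)⁻¹ :=
            Finset.sum_le_sum hstep
        _ = ((t : ℝ) + 1) ^ (1 - β') * ∑ n ∈ Finset.range (t + 1), ((n : ℝ) + 1)⁻¹ := by
            rw [Finset.mul_sum]
        _ ≤ ((t : ℝ) + 1) ^ (1 - β') * (1 + Real.log (t + 1)) := by
            apply mul_le_mul_of_nonneg_left _ (by positivity)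
            · have h := harmonic_le_one_add_log (t + 1)
              have heq : ((harmonic (t + 1) : ℚ) : ℝ)
                  = ∑ n ∈ Finset.range (t + 1), ((n : ℝ) + 1)⁻¹ := by
                rw [harmonic]
                push_cast
                rfl
              rw [heq] at h
              push_cast at h
              exact h
    have hA : ((t : ℝ) + 1) ^ (1 - β') ≤ 2 * (t : ℝ) ^ (1 - β') := by
      calc ((t : ℝ) + 1) ^ (1 - β') ≤ (2 * (t : ℝ)) ^ (1 - β') := by
            apply Real.rpow_le_rpow (by positivity) (by linarith) (by linarith)
        _ = (2 : ℝ) ^ (1 - β') * (t : ℝ) ^ (1 - β') := by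
            rw [Real.mul_rpow (by norm_num) (by positivity)]
        _ ≤ 2 * (t : ℝ) ^ (1 - β') := by
            apply mul_le_mul_of_nonneg_right _ (by positivity)
            · calc (2 : ℝ) ^ (1 - β') ≤ (2 : ℝ) ^ (1 : ℝ) :=
                  Real.rpow_le_rpow_of_exponent_le one_le_two (by linarith)
                _ = 2 := Real.rpow_one 2
    have hlogt : Real.log 2 ≤ Real.log t := Real.log_le_log (by norm_num) ht2
    have hlogtpos : 0 < Real.log t := lt_of_lt_of_le hlog2 hlogt
    have hB : 1 + Real.log ((t : ℝ) + 1) ≤ (2 + 1 / Real.log 2) * Real.log t := by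
      have h1 : Real.log ((t : ℝ) + 1) ≤ 2 * Real.log t := by
        have hle : (t : ℝ) + 1 ≤ (t : ℝ) ^ (2 : ℕ) := by nlinarith
        calc Real.log ((t : ℝ) + 1) ≤ Real.log ((t : ℝ) ^ (2 : ℕ)) :=
              Real.log_le_log (by positivity) hle
          _ = 2 * Real.log t := by rw [Real.log_pow]; push_cast; ring
      have h2 : 1 ≤ (1 / Real.log 2) * Real.log t := by
        rw [one_div, inv_mul_eq_div, le_div_iff₀ hlog2]
        linarith
      nlinarith
    have htβ : (0 : ℝ) < (t : ℝ) ^ β' := Real.rpow_pos_of_pos htpos β'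
    calc |W t - V t| ≤ (1 / t) * ∑ n ∈ Finset.range (t + 1), C₁ * ((n : ℝ) + 1) ^ (-β') :=
          key t (by omega)
      _ = (C₁ / t) * ∑ n ∈ Finset.range (t + 1), ((n : ℝ) + 1) ^ (-β') := by
          rw [← Finset.mul_sum]; ring
      _ ≤ (C₁ / t) * (((t : ℝ) + 1) ^ (1 - β') * (1 + Real.log (t + 1))) :=
          mul_le_mul_of_nonneg_left hsum (by positivity)
      _ ≤ (C₁ / t) * ((2 * (t : ℝ) ^ (1 - β')) * ((2 + 1 / Real.log 2) * Real.log t)) := by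
          have hBnn : (0 : ℝ) ≤ 1 + Real.log ((t : ℝ) + 1) := by
            have : (0 : ℝ) ≤ Real.log ((t : ℝ) + 1) := Real.log_nonneg (by linarith)
            linarith
          exact mul_le_mul_of_nonneg_left
            (mul_le_mul hA hB hBnn (by positivity)) (by positivity)
      _ = 2 * C₁ * (2 + 1 / Real.log 2) * Real.log t / (t : ℝ) ^ β' := by
          rw [Real.rpow_sub htpos, Real.rpow_one]
          field_simp
  refine ⟨⟨C₁, hC₁pos, fun t ht => ?_⟩,
    ⟨2 * C₁ * (2 + 1 / Real.log 2), by positivity, hlogclaim⟩, ?_⟩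
  · have : (0 : ℝ) ≤ (C₁ / t) * |W 0 - V 0| := by positivity
    linarith [key t ht]
  · -- convergence to zero
    have hbd : ∀ t : ℕ, 2 ≤ t → |W t - V t|
        ≤ 2 * C₁ * (2 + 1 / Real.log 2) * (Real.log t / (t : ℝ) ^ β') := by
      intro t ht
      rw [← mul_div_assoc]
      exact hlogclaim t ht
    have h0 : Tendsto (fun t : ℕ => Real.log t / (t : ℝ) ^ β') atTop (nhds 0) :=
      ((isLittleO_log_rpow_atTop hβ'pos).tendsto_div_nhds_zero).comp
        tendsto_natCast_atTop_atTop
    have h0' : Tendsto (fun t : ℕ =>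
        2 * C₁ * (2 + 1 / Real.log 2) * (Real.log t / (t : ℝ) ^ β')) atTop (nhds 0) := by
      have := h0.const_mul (2 * C₁ * (2 + 1 / Real.log 2))
      rwa [mul_zero] at this
    apply squeeze_zero_norm' _ h0'
    filter_upwards [eventually_ge_atTop 2] with t ht
    exact (hbd t ht)
end

section
/- Let (A_t)_{t≥0} be a square-integrable process adapted to (ℱ_t) with A_{t+1} = A_t + (φ*/(t+1))·ΔM_{t+1} + R_{t+1}, where E[ΔM_{t+1}|ℱ_t] = 0, φ* ∈ (0,1], R_t = O(1/t^{1+β}) with β > 0, sup_t E[|A_t|] < ∞, and Σ_t E[(ΔM_{t+1})²]/(t+1)² < ∞. Then sup_t E[A_t²] < ∞ and A_t converges to its almost sure limit A_∞ also in L². -/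
/-!
In `L²` the increments of `A_t` are `φ*/(t+1) · ΔM_{t+1}` plus a remainder of norm
`O(t^{-1-β})`. Martingale differences are orthogonal (condition the product on the earlier
σ-algebra), so by Pythagoras the assumption `Σ E[ΔM²]/(t+1)² < ∞` makes the martingale part
summable in `L²`, while the remainders are summable in norm. Hence `A_t` converges in `L²`,
which bounds the second moments; a subsequence converges a.e., so the `L²` limit is `A_∞`.
-/

open MeasureTheory Filter Finset
open scoped Topology

section OrthogonalSeries

variable {𝕜 E : Type*} [RCLike 𝕜] [NormedAddCommGroup E] [InnerProductSpace 𝕜 E]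

local notation "⟪" x ", " y "⟫" => inner 𝕜 x y

theorem norm_sum_sq_eq_sum_norm_sq_of_pairwise_inner_eq_zero {ι : Type*} {x : ι → E}
    (hx : Pairwise fun i j => ⟪x i, x j⟫ = 0) (s : Finset ι) :
    ‖∑ i ∈ s, x i‖ ^ 2 = ∑ i ∈ s, ‖x i‖ ^ 2 := by
  classical
  induction s using Finset.induction_on with
  | empty => simp
  | insert i s hi ih =>
    have horth : ⟪x i, ∑ j ∈ s, x j⟫ = 0 := by
      rw [inner_sum]
      exact Finset.sum_eq_zero fun j hj => hx (ne_of_mem_of_not_mem hj hi).symm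
    rw [sum_insert hi, sum_insert hi, ← ih, sq, sq, sq,
      norm_add_sq_eq_norm_sq_add_norm_sq_of_inner_eq_zero _ _ horth]

theorem summable_of_pairwise_inner_eq_zero [CompleteSpace E] {ι : Type*} {x : ι → E}
    (hx : Pairwise fun i j => ⟪x i, x j⟫ = 0) (hx2 : Summable fun i => ‖x i‖ ^ 2) :
    Summable x := by
  rw [summable_iff_vanishing_norm]
  intro ε hε
  obtain ⟨s, hs⟩ := summable_iff_vanishing_norm.1 hx2 (ε ^ 2) (by positivity)
  refine ⟨s, fun t ht => ?_⟩
  have hsq : ‖∑ i ∈ t, x i‖ ^ 2 < ε ^ 2 := by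
    rw [norm_sum_sq_eq_sum_norm_sq_of_pairwise_inner_eq_zero hx]
    exact (le_abs_self _).trans_lt (hs t ht)
  exact lt_of_pow_lt_pow_left₀ 2 hε.le hsq

theorem exists_tendsto_of_orthogonal_increments [CompleteSpace E] {a x : ℕ → E}
    (hx : Pairwise fun i j => ⟪x i, x j⟫ = 0) (hx2 : Summable fun t => ‖x t‖ ^ 2)
    (herr : Summable fun t => ‖a (t + 1) - a t - x t‖) :
    ∃ L, Tendsto a atTop (𝓝 L) := by
  have hinc : Summable fun t => a (t + 1) - a t :=
    ((summable_of_pairwise_inner_eq_zero hx hx2).add herr.of_norm).congr fun t => by abel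
  refine ⟨a 0 + ∑' t, (a (t + 1) - a t), ?_⟩
  have := hinc.hasSum.tendsto_sum_nat.const_add (a 0)
  simpa only [sum_range_sub, add_sub_cancel] using this

end OrthogonalSeries

namespace MeasureTheory

variable {Ω : Type*} {m0 : MeasurableSpace Ω} {μ : Measure Ω}

theorem MemLp.inner_toLp_toLp {f g : Ω → ℝ} (hf : MemLp f 2 μ) (hg : MemLp g 2 μ) :
    inner ℝ (hf.toLp f) (hg.toLp g) = ∫ ω, f ω * g ω ∂μ := by
  rw [L2.inner_def]
  refine integral_congr_ae ?_
  filter_upwards [hf.coeFn_toLp, hg.coeFn_toLp] with ω hfω hgω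
  rw [hfω, hgω, real_inner_eq_re_inner, RCLike.inner_apply, conj_trivial, mul_comm]
  rfl

theorem MemLp.norm_toLp_sq {f : Ω → ℝ} (hf : MemLp f 2 μ) :
    ‖hf.toLp f‖ ^ 2 = ∫ ω, f ω ^ 2 ∂μ := by
  rw [← real_inner_self_eq_norm_sq, hf.inner_toLp_toLp hf]
  simp only [sq]

theorem integral_mul_eq_zero_of_condExp_eq_zero [IsFiniteMeasure μ] {m : MeasurableSpace Ω}
    (hm : m ≤ m0) {X Y : Ω → ℝ} (hXm : StronglyMeasurable[m] X) (hX : MemLp X 2 μ)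
    (hY : MemLp Y 2 μ) (hYm : μ[Y | m] =ᵐ[μ] 0) :
    ∫ ω, X ω * Y ω ∂μ = 0 := by
  have hXY : Integrable (X * Y) μ := hX.integrable_mul hY
  have hcond : μ[X * Y | m] =ᵐ[μ] 0 := by
    filter_upwards [condExp_mul_of_stronglyMeasurable_left hXm hXY (hY.integrable one_le_two),
      hYm] with ω hω hYω
    simp [hω, hYω]
  calc ∫ ω, X ω * Y ω ∂μ = ∫ ω, (μ[X * Y | m]) ω ∂μ := (integral_condExp hm).symm
    _ = 0 := by simp [integral_congr_ae hcond]

theorem pairwise_inner_toLp_eq_zero_of_condExp_eq_zero [IsFiniteMeasure μ]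
    (ℱ : Filtration ℕ m0) {ξ : ℕ → Ω → ℝ} (hξm : ∀ t, StronglyMeasurable[ℱ (t + 1)] (ξ t))
    (hξ : ∀ t, MemLp (ξ t) 2 μ) (hξℱ : ∀ t, μ[ξ t | ℱ t] =ᵐ[μ] 0) :
    Pairwise fun s t => inner ℝ ((hξ s).toLp (ξ s)) ((hξ t).toLp (ξ t)) = 0 := by
  have hlt : ∀ s t, s < t → inner ℝ ((hξ s).toLp (ξ s)) ((hξ t).toLp (ξ t)) = 0 := by
    intro s t hst
    rw [MemLp.inner_toLp_toLp]
    exact integral_mul_eq_zero_of_condExp_eq_zero (ℱ.le t) ((hξm s).mono (ℱ.mono hst))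
      (hξ s) (hξ t) (hξℱ t)
  intro s t hst
  rcases hst.lt_or_gt with h | h
  · exact hlt s t h
  · rw [real_inner_comm]
    exact hlt t s h

/-- The remainder `r` need not be measurable: it is only seen through `f' - f - c • g`. -/
theorem norm_toLp_sub_sub_smul_le [IsProbabilityMeasure μ] {p : ENNReal} [Fact (1 ≤ p)]
    {f f' g r : Ω → ℝ} (hf : MemLp f p μ) (hf' : MemLp f' p μ) (hg : MemLp g p μ) {c K : ℝ}
    (hrec : ∀ᵐ ω ∂μ, f' ω = f ω + c * g ω + r ω) (hr : ∀ᵐ ω ∂μ, |r ω| ≤ K) :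
    ‖hf'.toLp f' - hf.toLp f - c • hg.toLp g‖ ≤ K := by
  obtain ⟨_, hrω⟩ := hr.exists
  have hbound : ∀ᵐ ω ∂μ, ‖(hf'.toLp f' - hf.toLp f - c • hg.toLp g : Lp ℝ p μ) ω‖ ≤ K := by
    filter_upwards [hrec, hr, hf.coeFn_toLp, hf'.coeFn_toLp, hg.coeFn_toLp,
      Lp.coeFn_sub (hf'.toLp f' - hf.toLp f) (c • hg.toLp g),
      Lp.coeFn_sub (hf'.toLp f') (hf.toLp f), Lp.coeFn_smul c (hg.toLp g)]
      with ω hrecω hrω hfω hf'ω hgω h₁ h₂ h₃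
    simp only [h₁, h₂, h₃, Pi.sub_apply, Pi.smul_apply, hfω, hf'ω, hgω, smul_eq_mul, hrecω,
      Real.norm_eq_abs]
    convert hrω using 2
    ring
  simpa [measureUnivNNReal] using Lp.norm_le_of_ae_bound ((abs_nonneg _).trans hrω) hbound

theorem ae_eq_of_tendsto_toLp_of_ae_tendsto {E : Type*} [NormedAddCommGroup E] {p : ENNReal}
    [Fact (1 ≤ p)] {f : ℕ → Ω → E} (hf : ∀ n, MemLp (f n) p μ) {L : Lp E p μ}
    (hL : Tendsto (fun n => (hf n).toLp (f n)) atTop (𝓝 L)) {g : Ω → E}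
    (hg : ∀ᵐ ω ∂μ, Tendsto (fun n => f n ω) atTop (𝓝 (g ω))) :
    g =ᵐ[μ] L := by
  obtain ⟨ns, hns, hsub⟩ := (tendstoInMeasure_of_tendsto_Lp hL).exists_seq_tendsto_ae
  have hcoe : ∀ᵐ ω ∂μ, ∀ n, (hf n).toLp (f n) ω = f n ω :=
    ae_all_iff.2 fun n => (hf n).coeFn_toLp
  filter_upwards [hg, hsub, hcoe] with ω hgω hsubω hcoeω
  simp only [hcoeω] at hsubω
  exact tendsto_nhds_unique (hgω.comp hns.tendsto_atTop) hsubω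

theorem tendsto_integral_sq_sub_of_tendsto_toLp {A : ℕ → Ω → ℝ} (hA : ∀ t, MemLp (A t) 2 μ)
    {L : Lp ℝ 2 μ} (hL : Tendsto (fun t => (hA t).toLp (A t)) atTop (𝓝 L)) {g : Ω → ℝ}
    (hg : g =ᵐ[μ] L) :
    Tendsto (fun t => ∫ ω, (A t ω - g ω) ^ 2 ∂μ) atTop (𝓝 0) := by
  have hgL : MemLp g 2 μ := (Lp.memLp L).ae_eq hg.symm
  have hgL_toLp : hgL.toLp g = L := (hgL.toLp_congr (Lp.memLp L) hg).trans (Lp.toLp_coeFn L _)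
  have hnorm : ∀ t, ∫ ω, (A t ω - g ω) ^ 2 ∂μ = ‖(hA t).toLp (A t) - L‖ ^ 2 := fun t => by
    rw [← hgL_toLp, ← (hA t).toLp_sub hgL, MemLp.norm_toLp_sq]
    rfl
  simp_rw [hnorm]
  simpa using ((hL.sub_const L).norm).pow 2

end MeasureTheory

theorem L2_convergence_of_almost_martingale_general
    {Ω : Type*} {m0 : MeasurableSpace Ω} {μ : Measure Ω} [IsProbabilityMeasure μ]
    (ℱ : Filtration ℕ m0)
    (A ΔM R : ℕ → Ω → ℝ) (Ainf : Ω → ℝ)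
    (φstar β : ℝ) (hφ0 : 0 < φstar) (hφ1 : φstar ≤ 1) (hβ : 0 < β)
    (hAsq : ∀ t, MemLp (A t) 2 μ)
    (hMadp : ∀ t, StronglyMeasurable[ℱ (t + 1)] (ΔM (t + 1)))
    (hMsq : ∀ t, MemLp (ΔM t) 2 μ)
    (hMD : ∀ t, μ[ΔM (t + 1) | ℱ t] =ᵐ[μ] 0)
    (hR : ∃ C > (0 : ℝ), ∃ t₀ : ℕ, ∀ t ≥ t₀, ∀ ω, |R t ω| ≤ C / (t : ℝ) ^ (1 + β))
    (hrec : ∀ t : ℕ, ∀ᵐ ω ∂μ,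
      A (t + 1) ω = A t ω + (φstar / ((t : ℝ) + 1)) * ΔM (t + 1) ω + R (t + 1) ω)
    (hsum : Summable (fun t : ℕ => (∫ ω, (ΔM (t + 1) ω) ^ 2 ∂μ) / ((t : ℝ) + 1) ^ 2))
    (hlim : ∀ᵐ ω ∂μ, Tendsto (fun t => A t ω) atTop (nhds (Ainf ω))) :
    (∃ K : ℝ, ∀ t, ∫ ω, (A t ω) ^ 2 ∂μ ≤ K) ∧
    Tendsto (fun t : ℕ => ∫ ω, (A t ω - Ainf ω) ^ 2 ∂μ) atTop (nhds 0) := by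
  obtain ⟨C, -, t₀, hRbd⟩ := hR
  set a := fun t => (hAsq t).toLp (A t)
  set c : ℕ → ℝ := fun t => φstar / ((t : ℝ) + 1)
  set m := fun t => (hMsq (t + 1)).toLp (ΔM (t + 1))
  have horth : Pairwise fun s t => inner ℝ (c s • m s) (c t • m t) = 0 := fun s t hst => by
    simp only [real_inner_smul_left, real_inner_smul_right, m,
      pairwise_inner_toLp_eq_zero_of_condExp_eq_zero ℱ hMadp (fun t => hMsq (t + 1)) hMD hst,
      mul_zero]
  have hsq : Summable fun t => ‖c t • m t‖ ^ 2 := by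
    refine hsum.of_nonneg_of_le (fun t => by positivity) fun t => ?_
    have hc : c t ^ 2 ≤ 1 / ((t : ℝ) + 1) ^ 2 := by
      rw [div_pow]
      gcongr
      nlinarith
    rw [norm_smul, mul_pow, MemLp.norm_toLp_sq, Real.norm_eq_abs, sq_abs, div_eq_mul_one_div,
      mul_comm]
    exact mul_le_mul_of_nonneg_left hc (integral_nonneg fun ω => sq_nonneg _)
  have herr : Summable fun t => ‖a (t + 1) - a t - c t • m t‖ := by
    refine Summable.of_norm_bounded_eventually_nat
      (g := fun t => C * (((t + 1 : ℕ) : ℝ) ^ (1 + β))⁻¹) ?_ ?_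
    · exact ((summable_nat_add_iff 1).2 (Real.summable_nat_rpow_inv.2 (by linarith))).mul_left C
    · filter_upwards [eventually_ge_atTop t₀] with t ht
      rw [norm_norm, ← div_eq_mul_inv]
      exact norm_toLp_sub_sub_smul_le _ _ _ (hrec t)
        (ae_of_all _ (hRbd (t + 1) (by omega)))
  obtain ⟨L, hL⟩ := exists_tendsto_of_orthogonal_increments horth hsq herr
  have hAinf : Ainf =ᵐ[μ] L := ae_eq_of_tendsto_toLp_of_ae_tendsto hAsq hL hlim
  refine ⟨?_, tendsto_integral_sq_sub_of_tendsto_toLp hAsq hL hAinf⟩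
  obtain ⟨K, hK⟩ := hL.norm.bddAbove_range
  refine ⟨K ^ 2, fun t => ?_⟩
  rw [← (hAsq t).norm_toLp_sq]
  exact pow_le_pow_left₀ (norm_nonneg _) (hK ⟨t, rfl⟩) 2

/-- Let `(A_t)` be a square-integrable adapted process with
`A_{t+1} = A_t + (φ*/(t+1))·ΔM_{t+1} + R_{t+1}`, `E[ΔM_{t+1}|ℱ_t] = 0`, `φ* ∈ (0,1]`,
`R_t = O(1/t^{1+β})` with `β > 0`, `sup_t E[|A_t|] < ∞`, and
`Σ_t E[(ΔM_{t+1})²]/(t+1)² < ∞`.  Then `sup_t E[A_t²] < ∞` and `A_t` converges to its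
almost sure limit `A_∞` also in `L²`. -/
theorem L2_convergence_of_almost_martingale
    {Ω : Type*} {m0 : MeasurableSpace Ω} {μ : Measure Ω} [IsProbabilityMeasure μ]
    (ℱ : Filtration ℕ m0)
    (A ΔM R : ℕ → Ω → ℝ) (Ainf : Ω → ℝ)
    (φstar β : ℝ) (hφ0 : 0 < φstar) (hφ1 : φstar ≤ 1) (hβ : 0 < β)
    (hAadp : Adapted ℱ A) (hAsq : ∀ t, MemLp (A t) 2 μ)
    (hMadp : ∀ t, StronglyMeasurable[ℱ (t + 1)] (ΔM (t + 1)))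
    (hMsq : ∀ t, MemLp (ΔM t) 2 μ)
    (hMD : ∀ t, μ[ΔM (t + 1) | ℱ t] =ᵐ[μ] 0)
    (hR : ∃ C > (0 : ℝ), ∃ t₀ : ℕ, ∀ t ≥ t₀, ∀ ω, |R t ω| ≤ C / (t : ℝ) ^ (1 + β))
    (hrec : ∀ t : ℕ, ∀ᵐ ω ∂μ,
      A (t + 1) ω = A t ω + (φstar / ((t : ℝ) + 1)) * ΔM (t + 1) ω + R (t + 1) ω)
    (hbd1 : ∃ K : ℝ, ∀ t, ∫ ω, |A t ω| ∂μ ≤ K)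
    (hsum : Summable (fun t : ℕ => (∫ ω, (ΔM (t + 1) ω) ^ 2 ∂μ) / ((t : ℝ) + 1) ^ 2))
    (hlim : ∀ᵐ ω ∂μ, Tendsto (fun t => A t ω) atTop (nhds (Ainf ω))) :
    (∃ K : ℝ, ∀ t, ∫ ω, (A t ω) ^ 2 ∂μ ≤ K) ∧
    Tendsto (fun t : ℕ => ∫ ω, (A t ω - Ainf ω) ^ 2 ∂μ) atTop (nhds 0) :=
  L2_convergence_of_almost_martingale_general ℱ A ΔM R Ainf φstar β hφ0 hφ1 hβ hAsq hMadp hMsq hMD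
    hR hrec hsum hlim
end

section
/- Let (Z_t)_{t≥0} be a nonnegative real sequence satisfying Z_{t+1} ≤ (1 - a/(t+1))·Z_t + C·w_t/(t+1)², where a > 0, C > 0, and Σ_t w_t/(t+1)² < ∞ with w_t ≥ 0. Then Z_t → 0. -/
/-!
Robbins–Siegmund argument. Adding to `u n` the tail `∑_{k ≥ n} |e k|` of the error series gives a
nonnegative quantity that decreases by at least `α n * u n` at step `n`. Hence it converges, so `u`
converges to some `L ≥ 0`, and `∑ α n * u n < ∞`. If `L > 0`, then eventually `α n ≤ (2 / L) α n u n`,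
which contradicts `∑ α n = ∞`. For the theorem, `α t = a / (t + 1)` is a shifted harmonic series.
-/

open Filter Topology

noncomputable def lyapunov (u e : ℕ → ℝ) (n : ℕ) : ℝ := u n + ∑' k, |e (k + n)|

section Recursion

variable {u α e : ℕ → ℝ}

theorem tendsto_lyapunov_sub :
    Tendsto (fun n => lyapunov u e n - u n) atTop (𝓝 0) := by
  simpa [lyapunov] using tendsto_sum_nat_add fun k => |e k|

theorem lyapunov_succ_add_le (he : Summable e)
    (hrec : ∀ n, u (n + 1) ≤ (1 - α n) * u n + e n) (n : ℕ) :
    lyapunov u e (n + 1) + α n * u n ≤ lyapunov u e n := by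
  have htail : ∑' k, |e (k + n)| = |e n| + ∑' k, |e (k + (n + 1))| := by
    rw [((summable_nat_add_iff n).2 he.abs).tsum_eq_zero_add]
    simp only [zero_add, add_right_comm _ 1 n, add_assoc]
  simp only [lyapunov, htail]
  linarith [hrec n, le_abs_self (e n)]

theorem lyapunov_nonneg (hu : ∀ n, 0 ≤ u n) (n : ℕ) : 0 ≤ lyapunov u e n :=
  add_nonneg (hu n) (tsum_nonneg fun _ => abs_nonneg _)

variable (hu : ∀ n, 0 ≤ u n) (hα : ∀ n, 0 ≤ α n) (he : Summable e)
  (hrec : ∀ n, u (n + 1) ≤ (1 - α n) * u n + e n)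
include hu hα he hrec

theorem antitone_lyapunov : Antitone (lyapunov u e) :=
  antitone_nat_of_succ_le fun n => by
    linarith [lyapunov_succ_add_le he hrec n, mul_nonneg (hα n) (hu n)]

theorem summable_mul_of_le_one_sub_mul_add : Summable fun n => α n * u n := by
  have htelescope : ∀ N, ∑ k ∈ Finset.range N, α k * u k + lyapunov u e N ≤ lyapunov u e 0 := by
    intro N
    induction N with
    | zero => simp
    | succ N ih =>
      rw [Finset.sum_range_succ]
      linarith [lyapunov_succ_add_le he hrec N]
  refine summable_of_sum_range_le (c := lyapunov u e 0) (fun n => mul_nonneg (hα n) (hu n))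
    fun N => ?_
  linarith [htelescope N, lyapunov_nonneg (e := e) hu N]

theorem exists_tendsto_of_le_one_sub_mul_add : ∃ L, Tendsto u atTop (𝓝 L) := by
  have hbdd : BddBelow (Set.range (lyapunov u e)) :=
    ⟨0, Set.forall_mem_range.2 (lyapunov_nonneg hu)⟩
  refine ⟨⨅ n, lyapunov u e n, ?_⟩
  simpa using (tendsto_atTop_ciInf (antitone_lyapunov hu hα he hrec) hbdd).sub
    (tendsto_lyapunov_sub (u := u) (e := e))

theorem tendsto_zero_of_le_one_sub_mul_add (hα_div : ¬Summable α) :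
    Tendsto u atTop (𝓝 0) := by
  obtain ⟨L, hL⟩ := exists_tendsto_of_le_one_sub_mul_add hu hα he hrec
  have hL0 : 0 ≤ L := ge_of_tendsto' hL hu
  obtain rfl | hLpos := hL0.eq_or_lt
  · exact hL
  refine absurd ?_ hα_div
  have hsum := (summable_mul_of_le_one_sub_mul_add hu hα he hrec).mul_left (2 / L)
  refine hsum.of_norm_bounded_eventually_nat ?_
  filter_upwards [hL.eventually (le_mem_nhds (half_lt_self hLpos))] with n hn
  calc ‖α n‖ = 2 / L * (α n * (L / 2)) := by
        rw [Real.norm_of_nonneg (hα n)]; field_simp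
    _ ≤ 2 / L * (α n * u n) := by gcongr; exact hα n

end Recursion

theorem comparison_lemma_to_zero_general
    (Z w : ℕ → ℝ) (a C : ℝ) (ha : 0 < a)
    (hZ : ∀ t, 0 ≤ Z t)
    (hrec : ∀ t : ℕ, Z (t + 1) ≤ (1 - a / ((t : ℝ) + 1)) * Z t + C * w t / ((t : ℝ) + 1) ^ 2)
    (hsum : Summable (fun t : ℕ => w t / ((t : ℝ) + 1) ^ 2)) :
    Tendsto Z atTop (nhds 0) := by
  have hα : ∀ t : ℕ, 0 ≤ a / ((t : ℝ) + 1) := fun t => by positivity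
  have hα_div : ¬Summable fun t : ℕ => a / ((t : ℝ) + 1) := by
    simp_rw [div_eq_mul_one_div a, summable_mul_left_iff ha.ne']
    exact_mod_cast mt (summable_nat_add_iff 1).1 Real.not_summable_one_div_natCast
  have he : Summable fun t : ℕ => C * w t / ((t : ℝ) + 1) ^ 2 := by
    simpa only [mul_div_assoc] using hsum.mul_left C
  exact tendsto_zero_of_le_one_sub_mul_add hZ hα he hrec hα_div

/-- Deterministic comparison lemma: if `Z_{t+1} ≤ (1 - a/(t+1))·Z_t + C·w_t/(t+1)²`
with `Z_t ≥ 0`, `w_t ≥ 0`, `a > 0`, `C > 0` and `Σ_t w_t/(t+1)² < ∞`, then `Z_t → 0`. -/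
theorem comparison_lemma_to_zero
    (Z w : ℕ → ℝ) (a C : ℝ) (ha : 0 < a) (hC : 0 < C)
    (hZ : ∀ t, 0 ≤ Z t) (hw : ∀ t, 0 ≤ w t)
    (hrec : ∀ t : ℕ, Z (t + 1) ≤ (1 - a / ((t : ℝ) + 1)) * Z t + C * w t / ((t : ℝ) + 1) ^ 2)
    (hsum : Summable (fun t : ℕ => w t / ((t : ℝ) + 1) ^ 2)) :
    Tendsto Z atTop (nhds 0) :=
  comparison_lemma_to_zero_general Z w a C ha hZ hrec hsum
end
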